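/- For every λ ∈ ℂ with |λ| > 1 and every vertex w, the characteristic function χ_w lies in the range of S − λ on H^p_0(T); explicitly, (S − λ)f_w = χ_w where f_w(v) = −λ^{−(|v|−|w|+1)} for v in the sector S_w and f_w(v) = 0 otherwise, and f_w ∈ H^p_0(T). -/

import Mathlib

open scoped BigOperators
open Classical

/-- An infinite, locally finite rooted tree, presented combinatorially via a
parent function and a level (distance-to-root) function.  Every level is a
finite nonempty set of vertices. -/
structure HTree where
  V : Type
  root : V
  parent : V → V
  level : V → ℕ
  level_root : level root = 0
  root_of_level_zero : ∀ v, level v = 0 → v = root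
  level_parent : ∀ v, v ≠ root → level (parent v) + 1 = level v
  finite_level : ∀ n : ℕ, {v : V | level v = n}.Finite
  nonempty_level : ∀ n : ℕ, {v : V | level v = n}.Nonempty

namespace HTree

variable (T : HTree)

/-- The finite set of vertices at level `n`. -/
noncomputable def levelFinset (n : ℕ) : Finset T.V := (T.finite_level n).toFinset

/-- `γ(n)`, the number of vertices at level `n`. -/
noncomputable def gamma (n : ℕ) : ℕ := (T.levelFinset n).card

/-- The set of `m`-children of a vertex `v`. -/
noncomputable def nChildrenFinset (m : ℕ) (v : T.V) : Finset T.V :=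
  (T.levelFinset (T.level v + m)).filter (fun w => T.parent^[m] w = v)

/-- `γ(m,v)`, the number of `m`-children of `v`. -/
noncomputable def numNChildren (m : ℕ) (v : T.V) : ℕ := (T.nChildrenFinset m v).card

/-- The set of children of a vertex. -/
noncomputable def childrenFinset (v : T.V) : Finset T.V := T.nChildrenFinset 1 v

/-- `γ(1,v)`, the number of children of `v`. -/
noncomputable def numChildren (v : T.V) : ℕ := T.numNChildren 1 v

/-- `K(m,r)`, the maximal number of `m`-children among vertices at level `r`. -/
noncomputable def K (m r : ℕ) : ℕ := (T.levelFinset r).sup (fun v => T.numNChildren m v)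

/-- `M_p^p(n,f)`, the `p`-th power of the `p`-th mean of `|f|` over level `n`. -/
noncomputable def Mpp (p : ℝ) (f : T.V → ℂ) (n : ℕ) : ℝ :=
  (1 / (T.gamma n : ℝ)) * ∑ v ∈ T.levelFinset n, ‖f v‖ ^ p

/-- `M_p(n,f)`, the `p`-th mean of `|f|` over level `n`. -/
noncomputable def Mp (p : ℝ) (f : T.V → ℂ) (n : ℕ) : ℝ := (T.Mpp p f n) ^ (1 / p)

/-- Membership in the Hardy space `H^p(T)`. -/
def MemHp (p : ℝ) (f : T.V → ℂ) : Prop := ∃ C : ℝ, ∀ n : ℕ, T.Mp p f n ≤ C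

/-- Membership in the little Hardy space `H^p_0(T)`. -/
def MemHp0 (p : ℝ) (f : T.V → ℂ) : Prop :=
  Filter.Tendsto (T.Mp p f) Filter.atTop (nhds 0)

/-- The `H^p` norm, `sup_n M_p(n,f)`. -/
noncomputable def Hnorm (p : ℝ) (f : T.V → ℂ) : ℝ := ⨆ n : ℕ, T.Mp p f n

/-- The forward shift `(Sf)(v) = f(parent v)`, `(Sf)(root) = 0`. -/
noncomputable def S (f : T.V → ℂ) : T.V → ℂ := fun v => if v = T.root then 0 else f (T.parent v)

/-- The backward shift `(Bf)(v) = Σ_{w child of v} f(w)`. -/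
noncomputable def B (f : T.V → ℂ) : T.V → ℂ := fun v => ∑ w ∈ T.childrenFinset v, f w

/-- An operator `A` is bounded on the subspace described by `Mem`, with the
`H^p` norm. -/
def BoundedOn (A : (T.V → ℂ) → (T.V → ℂ)) (Mem : (T.V → ℂ) → Prop) (p : ℝ) : Prop :=
  ∃ C : ℝ, 0 ≤ C ∧ ∀ f, Mem f → Mem (A f) ∧ T.Hnorm p (A f) ≤ C * T.Hnorm p f

/-- The operator norm of `A` on the subspace described by `Mem`. -/
noncomputable def opNorm (A : (T.V → ℂ) → (T.V → ℂ)) (Mem : (T.V → ℂ) → Prop) (p : ℝ) : ℝ :=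
  sInf {C : ℝ | 0 ≤ C ∧ ∀ f, Mem f → Mem (A f) ∧ T.Hnorm p (A f) ≤ C * T.Hnorm p f}

/-- Hypercyclicity of an operator `A` on the subspace described by `Mem`. -/
def Hypercyclic (A : (T.V → ℂ) → (T.V → ℂ)) (Mem : (T.V → ℂ) → Prop) (p : ℝ) : Prop :=
  ∃ f, Mem f ∧ ∀ g, Mem g → ∀ ε : ℝ, 0 < ε →
    ∃ N : ℕ, T.Hnorm p (fun v => A^[N] f v - g v) < ε

end HTree
/-!
On the sector of `w` the function `f_w` is a geometric progression in the level with ratio `1/λ`,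
so `f_w(parent v) = λ f_w(v)` for every `v` of the sector other than `w`; hence `(S - λ) f_w`
vanishes there, equals `-λ f_w(w) = 1` at `w`, and vanishes off the sector because a vertex
outside it has its parent outside it as well. As `|f_w| ≤ |λ|^{-(n-|w|+1)}` on level `n`, every mean
`M_p(n, f_w)` is bounded by this geometric sequence, which tends to `0`.
-/

open Filter Topology

namespace HTree

variable (T : HTree)

lemma gamma_pos (n : ℕ) : 0 < T.gamma n := by
  obtain ⟨v, hv⟩ := T.nonempty_level n
  exact Finset.card_pos.mpr ⟨v, (T.finite_level n).mem_toFinset.mpr hv⟩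

lemma Mpp_nonneg (p : ℝ) (f : T.V → ℂ) (n : ℕ) : 0 ≤ T.Mpp p f n :=
  mul_nonneg (by positivity) (Finset.sum_nonneg fun _ _ => by positivity)

lemma Mp_nonneg (p : ℝ) (f : T.V → ℂ) (n : ℕ) : 0 ≤ T.Mp p f n :=
  Real.rpow_nonneg (T.Mpp_nonneg p f n) _

lemma Mp_le_of_norm_le {p c : ℝ} {f : T.V → ℂ} {n : ℕ} (hp : 0 < p) (hc : 0 ≤ c)
    (hf : ∀ v, T.level v = n → ‖f v‖ ≤ c) : T.Mp p f n ≤ c := by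
  have hγ : (0 : ℝ) < T.gamma n := by exact_mod_cast T.gamma_pos n
  have hMpp : T.Mpp p f n ≤ c ^ p := by
    have hsum : ∑ v ∈ T.levelFinset n, ‖f v‖ ^ p ≤ T.gamma n * c ^ p := by
      rw [gamma, ← nsmul_eq_mul]
      refine Finset.sum_le_card_nsmul _ _ _ fun v hv => ?_
      exact Real.rpow_le_rpow (norm_nonneg _)
        (hf v ((T.finite_level n).mem_toFinset.mp hv)) hp.le
    calc T.Mpp p f n ≤ 1 / T.gamma n * (T.gamma n * c ^ p) :=
          mul_le_mul_of_nonneg_left hsum (by positivity)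
      _ = c ^ p := by field_simp
  calc T.Mp p f n ≤ (c ^ p) ^ (1 / p) :=
        Real.rpow_le_rpow (T.Mpp_nonneg p f n) hMpp (by positivity)
    _ = c := by rw [← Real.rpow_mul hc, mul_one_div_cancel hp.ne', Real.rpow_one]

lemma memHp0_of_norm_le {p : ℝ} {f : T.V → ℂ} {a : ℕ → ℝ} (hp : 0 < p) (ha : ∀ n, 0 ≤ a n)
    (hf : ∀ v, ‖f v‖ ≤ a (T.level v)) (ha_lim : Tendsto a atTop (𝓝 0)) : T.MemHp0 p f :=
  squeeze_zero (T.Mp_nonneg p f)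
    (fun n => T.Mp_le_of_norm_le hp (ha n) fun v hv => hv ▸ hf v) ha_lim

lemma MemHp0.memHp {p : ℝ} {f : T.V → ℂ} (hf : T.MemHp0 p f) : T.MemHp p f := by
  obtain ⟨C, hC⟩ := Tendsto.bddAbove_range hf
  exact ⟨C, fun n => hC ⟨n, rfl⟩⟩

def InSector (w v : T.V) : Prop :=
  T.level w ≤ T.level v ∧ T.parent^[T.level v - T.level w] v = w

/-- The paper's `f_w`. -/
noncomputable def sectorFun (z : ℂ) (w v : T.V) : ℂ :=
  if T.InSector w v then -(z ^ (T.level v - T.level w + 1))⁻¹ else 0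

variable {T}

lemma inSector_self (w : T.V) : T.InSector w w :=
  ⟨le_rfl, by simp⟩

lemma InSector.eq_of_level_le {w v : T.V} (h : T.InSector w v) (hlev : T.level v ≤ T.level w) :
    v = w := by
  simpa [Nat.sub_eq_zero_of_le hlev] using h.2

lemma InSector.level_lt {w v : T.V} (h : T.InSector w v) (hvw : v ≠ w) :
    T.level w < T.level v :=
  lt_of_le_of_ne h.1 fun heq => hvw (h.eq_of_level_le heq.ge)

lemma not_inSector_parent_self {w : T.V} (hw : w ≠ T.root) : ¬ T.InSector w (T.parent w) :=
  fun h => by have := T.level_parent w hw; have := h.1; omega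

lemma inSector_parent_iff {w v : T.V} (hv : v ≠ T.root) (hvw : v ≠ w) :
    T.InSector w (T.parent v) ↔ T.InSector w v := by
  have hlev := T.level_parent v hv
  have hiter (hle : T.level w ≤ T.level (T.parent v)) :
      T.parent^[T.level v - T.level w] v =
        T.parent^[T.level (T.parent v) - T.level w] (T.parent v) := by
    rw [show T.level v - T.level w = T.level (T.parent v) - T.level w + 1 by omega,
      Function.iterate_succ_apply]
  constructor
  · rintro ⟨hle, hit⟩
    exact ⟨by omega, hiter hle ▸ hit⟩
  · intro h
    have hlt := h.level_lt hvw
    exact ⟨by omega, hiter (by omega) ▸ h.2⟩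

lemma norm_sectorFun_le (z : ℂ) (w v : T.V) :
    ‖T.sectorFun z w v‖ ≤ ‖z‖⁻¹ ^ (T.level v - T.level w + 1) := by
  unfold sectorFun
  split_ifs
  · rw [norm_neg, norm_inv, norm_pow, inv_pow]
  · rw [norm_zero]
    positivity

lemma S_sectorFun_of_ne_root {z : ℂ} {w v : T.V} (hv : v ≠ T.root) (hvw : v ≠ w) :
    T.S (T.sectorFun z w) v = z * T.sectorFun z w v := by
  rw [S, if_neg hv, sectorFun, sectorFun, inSector_parent_iff hv hvw]
  split_ifs with h
  · rcases eq_or_ne z 0 with rfl | hz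
    · simp
    rw [show T.level v - T.level w + 1 = T.level (T.parent v) - T.level w + 1 + 1 by
      have := T.level_parent v hv; have := h.level_lt hvw; omega, pow_succ]
    field_simp
    ring
  · rw [mul_zero]

lemma S_sectorFun_self (z : ℂ) (w : T.V) : T.S (T.sectorFun z w) w = 0 := by
  unfold S
  split_ifs with hw
  · rfl
  · exact if_neg (not_inSector_parent_self hw)

lemma S_sub_mul_sectorFun {z : ℂ} (hz : z ≠ 0) (w : T.V) :
    (fun v => T.S (T.sectorFun z w) v - z * T.sectorFun z w v) =
      fun v => if v = w then (1 : ℂ) else 0 := by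
  funext v
  by_cases hvw : v = w
  · subst hvw
    simp [S_sectorFun_self, sectorFun, inSector_self, hz]
  rw [if_neg hvw]
  by_cases hv : v = T.root
  · have hnot : ¬ T.InSector w v := fun h =>
      hvw (h.eq_of_level_le (by simp [hv, T.level_root]))
    rw [S, if_pos hv, sectorFun, if_neg hnot]
    ring
  · rw [S_sectorFun_of_ne_root hv hvw, sub_self]

end HTree

/-- for `|λ| > 1`, the characteristic function of any vertex `w` is in the
range of `S − λ`, witnessed by `f_w` supported on the sector of `w`. -/
theorem char_in_range_of_S_sub_lambda (T : HTree) (p : ℝ) (hp : 1 ≤ p)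
    (z : ℂ) (hz : 1 < ‖z‖) (w : T.V) :
    let fw : T.V → ℂ := fun v =>
      if T.level w ≤ T.level v ∧ T.parent^[T.level v - T.level w] v = w then
        -(z ^ (T.level v - T.level w + 1))⁻¹
      else 0
    T.MemHp p fw ∧ T.MemHp0 p fw ∧
      (fun v => T.S fw v - z * fw v) = fun v => if v = w then (1 : ℂ) else 0 := by
  intro fw
  have hfw : fw = T.sectorFun z w := by
    funext v
    exact if_congr Iff.rfl rfl rfl
  rw [hfw]
  have hr : ‖z‖⁻¹ < 1 := inv_lt_one_of_one_lt₀ hz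
  have hlim : Tendsto (fun n : ℕ => ‖z‖⁻¹ ^ (n - T.level w + 1)) atTop (𝓝 0) :=
    (tendsto_pow_atTop_nhds_zero_of_lt_one (by positivity) hr).comp
      ((tendsto_add_atTop_nat 1).comp (tendsto_sub_atTop_nat _))
  have hHp0 : T.MemHp0 p (T.sectorFun z w) :=
    T.memHp0_of_norm_le (by linarith) (fun _ => by positivity)
      (HTree.norm_sectorFun_le z w) hlim
  exact ⟨hHp0.memHp, hHp0, HTree.S_sub_mul_sectorFun (norm_pos_iff.mp (by linarith)) w⟩
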